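/- Let x ∈ X with p(x) ∈ ℝ. The following statements are equivalent: (i) the Basic Robust Subdifferential Condition holds at x, i.e., ∂p(x) = D(x) := ⋃_{u∈I(x)} proj^u_{X*} ∂F_u(x, 0_u), where I(x) := {u ∈ U : F_u(x, 0_u) = p(x)}; (ii) min-max robust duality holds at every x* ∈ ∂p(x), i.e., for every x* ∈ ∂p(x) there exist u ∈ U and y_u* ∈ Y_u* such that the infimum of p − x* over X is attained and p*(x*) = F_u*(x*, y_u*) = q(x*); (iii) strong robust duality holds at every x* ∈ ∂p(x), i.e., for every x* ∈ ∂p(x) there exist u ∈ U and y_u* ∈ Y_u* with p*(x*) = F_u*(x*, y_u*) = q(x*). -/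

import Mathlib

/-!
For `x* ∈ ∂p(x)` the Fenchel–Young equality gives `p*(x*) = ⟨x*, x⟩ - p(x)`, and weak duality
`p* ≤ q ≤ F_u*(x*, ·)` always holds, so strong duality at `x*` amounts to
`F_u*(x*, y*) ≤ p*(x*)` for some `u, y*`. Evaluating `F_u*` at `(x, 0)` turns this inequality into
`p(x) ≤ F_u(x, 0)`, so `u` is active, and it is then exactly the Fenchel–Young characterisation of
`(x*, y*) ∈ ∂F_u(x, 0)`; conversely `D(x) ⊆ ∂p(x)` always. The attainment in (ii) is automatic,
since `x` itself minimises `p - x*`.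
-/

noncomputable section

namespace RobustDuality

/-- The set of `ε`-minimizers of an extended-real-valued function `h`:
`{z | h z ∈ ℝ ∧ h z ≤ inf h + ε}` (empty when `inf h ∉ ℝ`). -/
def epsArgmin {Z : Type*} (h : Z → EReal) (ε : ℝ) : Set Z :=
  {z | (∃ r : ℝ, h z = (r : EReal)) ∧ h z ≤ (⨅ w, h w) + (ε : EReal)}

variable {X : Type*} [AddCommGroup X] [Module ℝ X] [TopologicalSpace X]
  [IsTopologicalAddGroup X] [ContinuousSMul ℝ X] [LocallyConvexSpace ℝ X] [T2Space X]

/-- `(M^ε h)(x*) := ε-argmin (h - x*)` for `h : X → EReal` and `x* ∈ X*`. -/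
def M1 (h : X → EReal) (ε : ℝ) (xs : X →L[ℝ] ℝ) : Set X :=
  epsArgmin (fun x => h x - ((xs x : ℝ) : EReal)) ε

/-- Fenchel conjugate of `h : X → EReal`. -/
def conj1 (h : X → EReal) (xs : X →L[ℝ] ℝ) : EReal :=
  ⨆ x : X, ((xs x : ℝ) : EReal) - h x

/-- `ε`-subdifferential of `h : X → EReal` at `a`. -/
def epsSubdiff1 (h : X → EReal) (ε : ℝ) (a : X) : Set (X →L[ℝ] ℝ) :=
  {xs | (∃ r : ℝ, h a = (r : EReal)) ∧
    ∀ x, h a + ((xs x - xs a - ε : ℝ) : EReal) ≤ h x}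

section Pair

variable {Yu : Type*} [AddCommGroup Yu] [Module ℝ Yu] [TopologicalSpace Yu]
  [IsTopologicalAddGroup Yu] [ContinuousSMul ℝ Yu] [LocallyConvexSpace ℝ Yu] [T2Space Yu]

/-- Fenchel conjugate of `F : X × Y → EReal` at `(x*, y*)`. -/
def conj2 (F : X × Yu → EReal) (xs : X →L[ℝ] ℝ) (ys : Yu →L[ℝ] ℝ) : EReal :=
  ⨆ z : X × Yu, ((xs z.1 + ys z.2 : ℝ) : EReal) - F z

/-- `(M^ε F)(x*, y*) := ε-argmin (F - (x*, y*))`. -/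
def M2 (F : X × Yu → EReal) (ε : ℝ) (xs : X →L[ℝ] ℝ) (ys : Yu →L[ℝ] ℝ) : Set (X × Yu) :=
  epsArgmin (fun z => F z - ((xs z.1 + ys z.2 : ℝ) : EReal)) ε

/-- `ε`-subdifferential of `F : X × Y → EReal` at `a`, as a set of dual pairs. -/
def epsSubdiff2 (F : X × Yu → EReal) (ε : ℝ) (a : X × Yu) :
    Set ((X →L[ℝ] ℝ) × (Yu →L[ℝ] ℝ)) :=
  {zs | (∃ r : ℝ, F a = (r : EReal)) ∧
    ∀ z, F a + ((zs.1 z.1 + zs.2 z.2 - zs.1 a.1 - zs.2 a.2 - ε : ℝ) : EReal) ≤ F z}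

end Pair

variable {U : Type*} {Y : U → Type*} [∀ u, AddCommGroup (Y u)] [∀ u, Module ℝ (Y u)]
  [∀ u, TopologicalSpace (Y u)] [∀ u, IsTopologicalAddGroup (Y u)]
  [∀ u, ContinuousSMul ℝ (Y u)] [∀ u, LocallyConvexSpace ℝ (Y u)] [∀ u, T2Space (Y u)]

/-- The robust objective `p := sup_{u ∈ U} F_u (·, 0_u)`. -/
def pRob (F : ∀ u, X × Y u → EReal) (x : X) : EReal := ⨆ u, F u (x, 0)

/-- `q := inf over u ∈ U and y* ∈ Y_u* of F_u*(·, y*)`. -/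
def qRob (F : ∀ u, X × Y u → EReal) (xs : X →L[ℝ] ℝ) : EReal :=
  ⨅ (u : U) (ys : Y u →L[ℝ] ℝ), conj2 (F u) xs ys

/-- `S^ε(x*) := {x : p x ∈ ℝ ∧ p x - ⟨x*, x⟩ ≤ -q x* + ε}`. -/
def Sset (F : ∀ u, X × Y u → EReal) (ε : ℝ) (xs : X →L[ℝ] ℝ) : Set X :=
  {x | (∃ r : ℝ, pRob F x = (r : EReal)) ∧
    pRob F x - ((xs x : ℝ) : EReal) ≤ -qRob F xs + (ε : EReal)}

/-- `J^ε(u) := {x : p x ∈ ℝ ∧ p x ≤ F_u(x, 0) + ε}`. -/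
def Jset (F : ∀ u, X × Y u → EReal) (ε : ℝ) (u : U) : Set X :=
  {x | (∃ r : ℝ, pRob F x = (r : EReal)) ∧ pRob F x ≤ F u (x, 0) + (ε : EReal)}

/-- `A^{(ε₁,ε₂)}_{(u,y*)}(x*) := {x ∈ J^{ε₁}(u) : (x, 0) ∈ (M^{ε₂}F_u)(x*, y*)}`. -/
def Aset (F : ∀ u, X × Y u → EReal) (ε₁ ε₂ : ℝ) (u : U) (ys : Y u →L[ℝ] ℝ)
    (xs : X →L[ℝ] ℝ) : Set X :=
  {x | x ∈ Jset F ε₁ u ∧ (x, (0 : Y u)) ∈ M2 (F u) ε₂ xs ys}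

/-- `𝒜^ε(x*)`. -/
def calA (F : ∀ u, X × Y u → EReal) (ε : ℝ) (xs : X →L[ℝ] ℝ) : Set X :=
  ⋂ (η : ℝ) (_ : 0 < η),
    ⋃ (u : U) (ys : Y u →L[ℝ] ℝ) (ε₁ : ℝ) (ε₂ : ℝ)
      (_ : 0 ≤ ε₁) (_ : 0 ≤ ε₂) (_ : ε₁ + ε₂ = ε + η), Aset F ε₁ ε₂ u ys xs

/-- `B^ε_{(u,y*)}(x*)`. -/
def Bset (F : ∀ u, X × Y u → EReal) (ε : ℝ) (u : U) (ys : Y u →L[ℝ] ℝ)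
    (xs : X →L[ℝ] ℝ) : Set X :=
  ⋃ (ε₁ : ℝ) (ε₂ : ℝ) (_ : 0 ≤ ε₁) (_ : 0 ≤ ε₂) (_ : ε₁ + ε₂ = ε),
    Aset F ε₁ ε₂ u ys xs

/-- `B^ε(x*) := ⋃_{u, y*} B^ε_{(u,y*)}(x*)`. -/
def BsetAll (F : ∀ u, X × Y u → EReal) (ε : ℝ) (xs : X →L[ℝ] ℝ) : Set X :=
  ⋃ (u : U) (ys : Y u →L[ℝ] ℝ), Bset F ε u ys xs

/-- `I^ε(x)`: the set of `ε`-active indices at `x`. -/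
def Iset (F : ∀ u, X × Y u → EReal) (ε : ℝ) (x : X) : Set U :=
  {u | (∃ r : ℝ, pRob F x = (r : EReal)) ∧ pRob F x - (ε : EReal) ≤ F u (x, 0)}

/-- `C^ε(x)`. -/
def Cset (F : ∀ u, X × Y u → EReal) (ε : ℝ) (x : X) : Set (X →L[ℝ] ℝ) :=
  ⋂ (η : ℝ) (_ : 0 < η),
    ⋃ (ε₁ : ℝ) (ε₂ : ℝ) (_ : 0 ≤ ε₁) (_ : 0 ≤ ε₂) (_ : ε₁ + ε₂ = ε + η)
      (u : U) (_ : u ∈ Iset F ε₁ x),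
      Prod.fst '' epsSubdiff2 (F u) ε₂ (x, (0 : Y u))

/-- `D^ε(x)`. -/
def Dset (F : ∀ u, X × Y u → EReal) (ε : ℝ) (x : X) : Set (X →L[ℝ] ℝ) :=
  ⋃ (ε₁ : ℝ) (ε₂ : ℝ) (_ : 0 ≤ ε₁) (_ : 0 ≤ ε₂) (_ : ε₁ + ε₂ = ε)
    (u : U) (_ : u ∈ Iset F ε₁ x),
    Prod.fst '' epsSubdiff2 (F u) ε₂ (x, (0 : Y u))

/-- The exact active index set `I(x) := {u : F_u(x,0) = p(x)}` (when `p(x) ∈ ℝ`). -/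
def I0set (F : ∀ u, X × Y u → EReal) (x : X) : Set U :=
  {u | (∃ r : ℝ, pRob F x = (r : EReal)) ∧ F u (x, 0) = pRob F x}

/-- `D(x) := ⋃_{u ∈ I(x)} proj_{X*} ∂F_u(x, 0)`. -/
def D0set (F : ∀ u, X × Y u → EReal) (x : X) : Set (X →L[ℝ] ℝ) :=
  ⋃ (u : U) (_ : u ∈ I0set F x), Prod.fst '' epsSubdiff2 (F u) 0 (x, (0 : Y u))

/-- `B_{(u,y*)}(x*) := {x ∈ J(u) : (x, 0) ∈ (M F_u)(x*, y*)}`. -/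
def B0set (F : ∀ u, X × Y u → EReal) (u : U) (ys : Y u →L[ℝ] ℝ)
    (xs : X →L[ℝ] ℝ) : Set X :=
  {x | (∃ r : ℝ, pRob F x = (r : EReal)) ∧ F u (x, 0) = pRob F x ∧
    (x, (0 : Y u)) ∈ M2 (F u) 0 xs ys}

section EReal

lemma coe_sub_le_coe_iff {a c : ℝ} {b : EReal} :
    (a : EReal) - b ≤ c ↔ ((a - c : ℝ) : EReal) ≤ b := by
  induction b using EReal.rec with
  | bot => simp only [EReal.coe_sub_bot, top_le_iff, le_bot_iff, EReal.coe_ne_top, EReal.coe_ne_bot]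
  | coe b => norm_cast; exact sub_le_comm
  | top => simp

lemma iSup_coe_sub_le_iff {Z : Type*} (ℓ : Z → ℝ) (h : Z → EReal) (c : ℝ) :
    (⨆ z, (ℓ z : EReal) - h z) ≤ c ↔ ∀ z, ((ℓ z - c : ℝ) : EReal) ≤ h z := by
  simp only [iSup_le_iff, coe_sub_le_coe_iff]

end EReal

section Subdifferential

variable {E : Type*} [AddCommGroup E] [Module ℝ E] [TopologicalSpace E]

lemma mem_epsSubdiff1_zero_iff {h : E → EReal} {a : E} {r : ℝ} (hr : h a = r)
    {xs : E →L[ℝ] ℝ} : xs ∈ epsSubdiff1 h 0 a ↔ conj1 h xs ≤ ((xs a - r : ℝ) : EReal) := by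
  simp only [epsSubdiff1, conj1, iSup_coe_sub_le_iff, Set.mem_ofPred_eq, hr, ← EReal.coe_add]
  refine ⟨fun hxs z => ?_, fun hxs => ⟨⟨r, rfl⟩, fun z => ?_⟩⟩
  · convert hxs.2 z using 2; ring
  · convert hxs z using 2; ring

lemma coe_sub_le_conj1 (h : E → EReal) {a : E} {r : ℝ} (hr : h a = r) (xs : E →L[ℝ] ℝ) :
    ((xs a - r : ℝ) : EReal) ≤ conj1 h xs := by
  simpa [conj1, hr] using le_iSup (fun z => ((xs z : ℝ) : EReal) - h z) a

lemma conj1_eq_of_mem_epsSubdiff1 {h : E → EReal} {a : E} {r : ℝ} (hr : h a = r)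
    {xs : E →L[ℝ] ℝ} (hxs : xs ∈ epsSubdiff1 h 0 a) : conj1 h xs = ((xs a - r : ℝ) : EReal) :=
  le_antisymm ((mem_epsSubdiff1_zero_iff hr).1 hxs) (coe_sub_le_conj1 h hr xs)

lemma sub_le_sub_of_mem_epsSubdiff1 {h : E → EReal} {a : E} {xs : E →L[ℝ] ℝ}
    (hxs : xs ∈ epsSubdiff1 h 0 a) (z : E) :
    h a - ((xs a : ℝ) : EReal) ≤ h z - ((xs z : ℝ) : EReal) := by
  obtain ⟨⟨r, hr⟩, hsub⟩ := hxs
  rw [hr, ← EReal.coe_sub, EReal.le_sub_iff_add_le (by simp) (by simp), ← EReal.coe_add]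
  convert hsub z using 1
  rw [hr, ← EReal.coe_add]; congr 1; ring

lemma sub_eq_iInf_of_mem_epsSubdiff1 {h : E → EReal} {a : E} {xs : E →L[ℝ] ℝ}
    (hxs : xs ∈ epsSubdiff1 h 0 a) :
    h a - ((xs a : ℝ) : EReal) = ⨅ z, (h z - ((xs z : ℝ) : EReal)) :=
  le_antisymm (le_iInf (sub_le_sub_of_mem_epsSubdiff1 hxs)) (iInf_le _ a)

variable {V : Type*} [AddCommGroup V] [Module ℝ V] [TopologicalSpace V]

lemma mem_epsSubdiff2_zero_iff {f : E × V → EReal} {a : E × V} {r : ℝ} (hr : f a = r)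
    {zs : (E →L[ℝ] ℝ) × (V →L[ℝ] ℝ)} :
    zs ∈ epsSubdiff2 f 0 a ↔ conj2 f zs.1 zs.2 ≤ ((zs.1 a.1 + zs.2 a.2 - r : ℝ) : EReal) := by
  simp only [epsSubdiff2, conj2, iSup_coe_sub_le_iff, Set.mem_ofPred_eq, hr, ← EReal.coe_add]
  refine ⟨fun hzs z => ?_, fun hzs => ⟨⟨r, rfl⟩, fun z => ?_⟩⟩
  · convert hzs.2 z using 2; ring
  · convert hzs z using 2; ring

end Subdifferential

lemma le_pRob {E : Type*} {W : U → Type*} [∀ u, AddCommGroup (W u)]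
    (F : ∀ u, E × W u → EReal) (u : U) (z : E) : F u (z, 0) ≤ pRob F z :=
  le_iSup (fun v => F v (z, 0)) u

section Robust

variable {E : Type*} [AddCommGroup E] [Module ℝ E] [TopologicalSpace E]
  {W : U → Type*} [∀ u, AddCommGroup (W u)] [∀ u, Module ℝ (W u)] [∀ u, TopologicalSpace (W u)]
  (F : ∀ u, E × W u → EReal)

lemma conj1_pRob_le_conj2 (xs : E →L[ℝ] ℝ) (u : U) (ys : W u →L[ℝ] ℝ) :
    conj1 (pRob F) xs ≤ conj2 (F u) xs ys := by
  refine iSup_le fun z => ?_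
  calc ((xs z : ℝ) : EReal) - pRob F z ≤ ((xs z + ys 0 : ℝ) : EReal) - F u (z, 0) := by
        rw [map_zero, add_zero]; exact EReal.sub_le_sub le_rfl (le_pRob F u z)
    _ ≤ conj2 (F u) xs ys :=
        le_iSup (fun w : E × W u => ((xs w.1 + ys w.2 : ℝ) : EReal) - F u w) (z, 0)

lemma conj1_pRob_le_qRob (xs : E →L[ℝ] ℝ) : conj1 (pRob F) xs ≤ qRob F xs :=
  le_iInf fun u => le_iInf fun ys => conj1_pRob_le_conj2 F xs u ys

lemma qRob_le_conj2 (xs : E →L[ℝ] ℝ) (u : U) (ys : W u →L[ℝ] ℝ) :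
    qRob F xs ≤ conj2 (F u) xs ys :=
  (iInf_le _ u).trans (iInf_le _ ys)

lemma conj1_eq_conj2_and_conj2_eq_qRob_iff (xs : E →L[ℝ] ℝ) (u : U) (ys : W u →L[ℝ] ℝ) :
    (conj1 (pRob F) xs = conj2 (F u) xs ys ∧ conj2 (F u) xs ys = qRob F xs) ↔
      conj2 (F u) xs ys ≤ conj1 (pRob F) xs := by
  refine ⟨fun h => h.1.ge, fun h => ?_⟩
  have h₁ := le_antisymm (conj1_pRob_le_conj2 F xs u ys) h
  exact ⟨h₁, le_antisymm (h₁ ▸ conj1_pRob_le_qRob F xs) (qRob_le_conj2 F xs u ys)⟩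

variable (x : E)

lemma D0set_subset_epsSubdiff1 : D0set F x ⊆ epsSubdiff1 (pRob F) 0 x := by
  simp only [D0set, Set.iUnion_subset_iff]
  rintro u ⟨⟨r, hr⟩, hu⟩ _ ⟨⟨xs, ys⟩, hmem, rfl⟩
  have hconj2 := (mem_epsSubdiff2_zero_iff (hu.trans hr)).1 hmem
  rw [map_zero, add_zero] at hconj2
  exact (mem_epsSubdiff1_zero_iff hr).2 ((conj1_pRob_le_conj2 F xs u ys).trans hconj2)

lemma mem_D0set_iff_exists_conj2_le {xs : E →L[ℝ] ℝ} (hxs : xs ∈ epsSubdiff1 (pRob F) 0 x) :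
    xs ∈ D0set F x ↔ ∃ (u : U) (ys : W u →L[ℝ] ℝ), conj2 (F u) xs ys ≤ conj1 (pRob F) xs := by
  obtain ⟨r, hr⟩ := hxs.1
  rw [conj1_eq_of_mem_epsSubdiff1 hr hxs]
  simp only [D0set, Set.mem_iUnion]
  constructor
  · rintro ⟨u, ⟨_, hu⟩, ⟨xs', ys⟩, hmem, rfl⟩
    refine ⟨u, ys, ?_⟩
    simpa using (mem_epsSubdiff2_zero_iff (hu.trans hr)).1 hmem
  · rintro ⟨u, ys, hconj2⟩
    have hFu : F u (x, 0) = r := by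
      refine le_antisymm (hr ▸ le_pRob F u x) ?_
      simpa using (iSup_coe_sub_le_iff _ _ _).1 hconj2 (x, 0)
    refine ⟨u, ⟨⟨r, hr⟩, hFu.trans hr.symm⟩, (xs, ys), ?_, rfl⟩
    exact (mem_epsSubdiff2_zero_iff hFu).2 (by simpa using hconj2)

end Robust

theorem BRSC_iff_general
    (F : ∀ u, X × Y u → EReal)
    (x : X) :
    List.TFAE
      [epsSubdiff1 (pRob F) 0 x = D0set F x,
       ∀ xs ∈ epsSubdiff1 (pRob F) 0 x, ∃ (u : U) (ys : Y u →L[ℝ] ℝ),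
         (∃ xbar : X, pRob F xbar - ((xs xbar : ℝ) : EReal) =
            ⨅ z : X, (pRob F z - ((xs z : ℝ) : EReal))) ∧
         conj1 (pRob F) xs = conj2 (F u) xs ys ∧ conj2 (F u) xs ys = qRob F xs,
       ∀ xs ∈ epsSubdiff1 (pRob F) 0 x, ∃ (u : U) (ys : Y u →L[ℝ] ℝ),
         conj1 (pRob F) xs = conj2 (F u) xs ys ∧ conj2 (F u) xs ys = qRob F xs] := by
  have mem_D0set_iff_strong : ∀ xs ∈ epsSubdiff1 (pRob F) 0 x, xs ∈ D0set F x ↔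
      ∃ (u : U) (ys : Y u →L[ℝ] ℝ),
        conj1 (pRob F) xs = conj2 (F u) xs ys ∧ conj2 (F u) xs ys = qRob F xs := by
    intro xs hxs
    simp only [conj1_eq_conj2_and_conj2_eq_qRob_iff, mem_D0set_iff_exists_conj2_le F x hxs]
  tfae_have 1 ↔ 3 :=
    ⟨fun h xs hxs => (mem_D0set_iff_strong xs hxs).1 (h ▸ hxs),
     fun h => Set.Subset.antisymm (fun xs hxs => (mem_D0set_iff_strong xs hxs).2 (h xs hxs))
       (D0set_subset_epsSubdiff1 F x)⟩
  tfae_have 2 ↔ 3 :=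
    forall₂_congr fun _ hxs => exists₂_congr fun _ _ =>
      and_iff_right ⟨x, sub_eq_iInf_of_mem_epsSubdiff1 hxs⟩
  tfae_finish

/-- Theorem 8.2 (Basic Robust Subdifferential Condition). -/
theorem BRSC_iff
    (F : ∀ u, X × Y u → EReal) (hU : Nonempty U) (hF : ∀ u z, F u z ≠ ⊥)
    (x : X) (hx : ∃ r : ℝ, pRob F x = (r : EReal)) :
    List.TFAE
      [epsSubdiff1 (pRob F) 0 x = D0set F x,
       ∀ xs ∈ epsSubdiff1 (pRob F) 0 x, ∃ (u : U) (ys : Y u →L[ℝ] ℝ),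
         (∃ xbar : X, pRob F xbar - ((xs xbar : ℝ) : EReal) =
            ⨅ z : X, (pRob F z - ((xs z : ℝ) : EReal))) ∧
         conj1 (pRob F) xs = conj2 (F u) xs ys ∧ conj2 (F u) xs ys = qRob F xs,
       ∀ xs ∈ epsSubdiff1 (pRob F) 0 x, ∃ (u : U) (ys : Y u →L[ℝ] ℝ),
         conj1 (pRob F) xs = conj2 (F u) xs ys ∧ conj2 (F u) xs ys = qRob F xs] :=
  BRSC_iff_general F x

end RobustDuality
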